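/- For all σ > 0 and η > 0, ∫_{−∞}^{∞} h · (π σ²)^{−1/2} exp(−h²/σ²) · erf(h/η) dh = (1/√π) · σ² / √(σ² + η²). -/

import Mathlib

/-!
Integrate by parts against `v = -(2b)⁻¹ exp(-b x²)`, whose derivative is `x exp(-b x²)`.
Since `erf'(c x) = (2c/√π) exp(-c² x²)`, the integral becomes the Gaussian integral
`(c / (b √π)) ∫ exp(-(b + c²) x²) = (c / (b √π)) √(π / (b + c²))`; the boundary terms vanish
because `|erf| ≤ 1`. The theorem is the case `b = σ⁻²`, `c = η⁻¹`.
-/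

open Real MeasureTheory

/-- The Gaussian error function `erf(x) = (2/√π) ∫₀ˣ exp(−t²) dt`. -/
noncomputable def erf (x : ℝ) : ℝ := (2 / Real.sqrt π) * ∫ t in (0 : ℝ)..x, Real.exp (-t ^ 2)

open Filter Set Topology

lemma hasDerivAt_erf (x : ℝ) : HasDerivAt erf (2 / √π * exp (-x ^ 2)) x := by
  have hcont : Continuous fun t : ℝ => exp (-t ^ 2) := by fun_prop
  exact (intervalIntegral.integral_hasDerivAt_right (hcont.intervalIntegrable _ _)
    (hcont.stronglyMeasurableAtFilter _ _) hcont.continuousAt).const_mul _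

lemma differentiable_erf : Differentiable ℝ erf := fun x => (hasDerivAt_erf x).differentiableAt

lemma continuous_erf : Continuous erf := differentiable_erf.continuous

lemma hasDerivAt_erf_mul (c x : ℝ) :
    HasDerivAt (fun x => erf (c * x)) (2 * c / √π * exp (-c ^ 2 * x ^ 2)) x := by
  refine ((hasDerivAt_erf (c * x)).comp x ((hasDerivAt_id x).const_mul c)).congr_deriv ?_
  rw [mul_pow, ← neg_mul]
  ring

lemma monotone_erf : Monotone erf :=
  monotone_of_deriv_nonneg differentiable_erf fun x => by
    rw [(hasDerivAt_erf x).deriv]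
    positivity

lemma erf_neg (x : ℝ) : erf (-x) = -erf x := by
  have h : ∫ t in (0 : ℝ)..-x, exp (-t ^ 2) = -∫ t in (0 : ℝ)..x, exp (-t ^ 2) := by
    have hsymm := intervalIntegral.integral_comp_neg (a := 0) (b := x) fun t => exp (-t ^ 2)
    simp only [neg_sq, neg_zero] at hsymm
    rw [intervalIntegral.integral_symm, hsymm]
  rw [erf, erf, h, mul_neg]

lemma tendsto_erf_atTop : Tendsto erf atTop (𝓝 1) := by
  have hint : IntegrableOn (fun t : ℝ => exp (-t ^ 2)) (Ioi 0) := by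
    simpa using (integrable_exp_neg_mul_sq one_pos).integrableOn
  have hlim := (intervalIntegral_tendsto_integral_Ioi 0 hint tendsto_id).const_mul (2 / √π)
  have hval : 2 / √π * ∫ t in Ioi (0 : ℝ), exp (-t ^ 2) = 1 := by
    have hπ : √π ≠ 0 := by positivity
    simpa [hπ] using congrArg (2 / √π * ·) (integral_gaussian_Ioi 1)
  rwa [hval] at hlim

lemma abs_erf_le_one (x : ℝ) : |erf x| ≤ 1 := by
  have hle : ∀ y, erf y ≤ 1 := monotone_erf.ge_of_tendsto tendsto_erf_atTop
  rw [abs_le]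
  exact ⟨by linarith [hle (-x), erf_neg x], hle x⟩

lemma integral_mul_exp_neg_mul_sq_mul_erf {b : ℝ} (hb : 0 < b) (c : ℝ) :
    ∫ x : ℝ, x * exp (-b * x ^ 2) * erf (c * x) = c / (b * √(b + c ^ 2)) := by
  set u : ℝ → ℝ := fun x => erf (c * x)
  set v : ℝ → ℝ := fun x => -(2 * b)⁻¹ * exp (-b * x ^ 2)
  set u' : ℝ → ℝ := fun x => 2 * c / √π * exp (-c ^ 2 * x ^ 2)
  set v' : ℝ → ℝ := fun x => x * exp (-b * x ^ 2)
  have hv : ∀ x, HasDerivAt v (v' x) x := fun x => by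
    refine ((((hasDerivAt_pow 2 x).const_mul (-b)).exp).const_mul (-(2 * b)⁻¹)).congr_deriv ?_
    simp only [v', Nat.cast_ofNat, neg_mul]
    field_simp
    ring
  have hu_meas : AEStronglyMeasurable u :=
    (continuous_erf.comp (continuous_const_mul c)).aestronglyMeasurable
  have hu_bdd : ∀ᵐ x, ‖u x‖ ≤ 1 := ae_of_all _ fun x => abs_erf_le_one (c * x)
  have hu'v : u' * v = fun x => -(c / (b * √π)) * exp (-(b + c ^ 2) * x ^ 2) := by
    ext x
    simp only [u', v, Pi.mul_apply]
    rw [show -(b + c ^ 2) * x ^ 2 = -c ^ 2 * x ^ 2 + -b * x ^ 2 by ring, exp_add]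
    ring
  have hparts := integral_mul_deriv_eq_deriv_mul_of_integrable (fun x _ => hasDerivAt_erf_mul c x)
    (fun x _ => hv x) ((integrable_mul_exp_neg_mul_sq hb).bdd_mul hu_meas hu_bdd)
    (hu'v ▸ (integrable_exp_neg_mul_sq (by positivity)).const_mul _)
    (((integrable_exp_neg_mul_sq hb).const_mul _).bdd_mul hu_meas hu_bdd)
  have hbc : √(b + c ^ 2) ≠ 0 := by positivity
  calc ∫ x, x * exp (-b * x ^ 2) * erf (c * x) = ∫ x, u x * v' x := by
        simp only [u, v', mul_comm (erf _)]
    _ = c / (b * √π) * √(π / (b + c ^ 2)) := by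
        rw [hparts, ← Pi.mul_def, hu'v, integral_const_mul, integral_gaussian, neg_mul, neg_neg]
    _ = c / (b * √(b + c ^ 2)) := by
        rw [sqrt_div pi_pos.le]
        field_simp

/-- The Gaussian–erf integral identity yielding the closed form of the
univariate conditional mean estimator:
`∫ h·(πσ²)^{−1/2} exp(−h²/σ²)·erf(h/η) dh = σ²/(√π √(σ²+η²))`. -/
theorem stmt8 (σ η : ℝ) (hσ : 0 < σ) (hη : 0 < η) :
    ∫ h : ℝ, h * (π * σ ^ 2) ^ (-(1 : ℝ) / 2) * Real.exp (-h ^ 2 / σ ^ 2) * erf (h / η) =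
      (1 / Real.sqrt π) * σ ^ 2 / Real.sqrt (σ ^ 2 + η ^ 2) := by
  have hintegrand : ∀ h : ℝ,
      h * (π * σ ^ 2) ^ (-(1 : ℝ) / 2) * exp (-h ^ 2 / σ ^ 2) * erf (h / η) =
        (π * σ ^ 2) ^ (-(1 : ℝ) / 2) * (h * exp (-(σ ^ 2)⁻¹ * h ^ 2) * erf (η⁻¹ * h)) := by
    intro h
    rw [neg_div (σ ^ 2), div_eq_inv_mul (h ^ 2), div_eq_inv_mul h, ← neg_mul]
    ring
  have hnorm : (π * σ ^ 2) ^ (-(1 : ℝ) / 2) = (√π * σ)⁻¹ := by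
    rw [neg_div, rpow_neg (by positivity), ← sqrt_eq_rpow, sqrt_mul pi_pos.le, sqrt_sq hσ.le]
  have hroot : √((σ ^ 2)⁻¹ + η⁻¹ ^ 2) = √(σ ^ 2 + η ^ 2) / (σ * η) := by
    rw [show (σ ^ 2)⁻¹ + η⁻¹ ^ 2 = (σ ^ 2 + η ^ 2) / (σ * η) ^ 2 by field_simp; ring,
      sqrt_div (by positivity), sqrt_sq (by positivity)]
  simp_rw [hintegrand]
  rw [integral_const_mul, integral_mul_exp_neg_mul_sq_mul_erf (by positivity), hnorm, hroot]
  field_simp
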